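/- arXiv:1101.4415 — 3 statements merged into one kernel-verified Lean document; each statement's English description precedes it below -/
import Mathlib

section
/- Let w = c_1 c_2 ... c_n be a word written as a concatenation of associative Lyndon–Shirshov words with c_1 ≤ c_2 ≤ ... ≤ c_n (its Lyndon factorization). If v is an associative Lyndon–Shirshov word that occurs as a (contiguous) subword of w, then v is a subword of c_i for some single index i; that is, v cannot properly straddle two or more factors. -/
/-! A Lyndon–Shirshov word is `≥` each of its nonempty suffixes. Suppose `v` straddled the
factor `c_i` and the factors after it: `v = s ++ t` with `s` a nonempty suffix of `c_i` and `t`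
a nonempty prefix of `c_{i+1} ++ c_{i+2} ++ ⋯`. Then `v < s ≤ c_i ≤ c_j` for all `j > i`,
while every nonempty suffix of `v` is `≤ v`. Peeling whole factors off the front of `t` keeps
it a suffix of `v`, until it becomes a prefix of some `c_j`; but then `c_j ≤ t ≤ v < c_j`. -/

variable {X : Type*} [LinearOrder X]

/-- Lexicographic order on words in which every word is smaller than
each of its proper prefixes (the empty word is the largest word):
`u < v` iff `u = x::u'`, `v = y::v'` and `x < y`, or `x = y` and `u' < v'`;
moreover every nonempty word is smaller than the empty word. -/
def llt : List X → List X → Prop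
  | [], _ => False
  | _ :: _, [] => True
  | a :: u, b :: v => a < b ∨ (a = b ∧ llt u v)

/-- Associative Lyndon–Shirshov word: a nonempty word `w` such that
`w > v ++ u` for every factorization `w = u ++ v` into nonempty words. -/
def IsLS (w : List X) : Prop :=
  w ≠ [] ∧ ∀ u v : List X, u ≠ [] → v ≠ [] → w = u ++ v → llt (v ++ u) w

lemma not_llt_nil (v : List X) : ¬ llt [] v := by simp [llt]

lemma llt_trichotomy : ∀ u v : List X, llt u v ∨ u = v ∨ llt v u
  | [], [] => Or.inr (Or.inl rfl)
  | [], _ :: _ => Or.inr (Or.inr trivial)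
  | _ :: _, [] => Or.inl trivial
  | a :: u, b :: v => by
    rcases lt_trichotomy a b with h | rfl | h
    · exact Or.inl (Or.inl h)
    · rcases llt_trichotomy u v with h | rfl | h
      · exact Or.inl (Or.inr ⟨rfl, h⟩)
      · exact Or.inr (Or.inl rfl)
      · exact Or.inr (Or.inr (Or.inr ⟨rfl, h⟩))
    · exact Or.inr (Or.inr (Or.inl h))

lemma llt_irrefl : ∀ u : List X, ¬ llt u u
  | [] => not_llt_nil []
  | a :: u => by
    rintro (h | ⟨-, h⟩)
    · exact lt_irrefl a h
    · exact llt_irrefl u h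

lemma llt_trans : ∀ {u v w : List X}, llt u v → llt v w → llt u w
  | [], _, _, h, _ => absurd h (not_llt_nil _)
  | _ :: _, [], _, _, h => absurd h (not_llt_nil _)
  | _ :: _, _ :: _, [], _, _ => trivial
  | _ :: _, _ :: _, _ :: _, h₁, h₂ => by
    rcases h₁ with h₁ | ⟨rfl, h₁⟩ <;> rcases h₂ with h₂ | ⟨rfl, h₂⟩
    · exact Or.inl (h₁.trans h₂)
    · exact Or.inl h₁
    · exact Or.inl h₂
    · exact Or.inr ⟨rfl, llt_trans h₁ h₂⟩

lemma llt_asymm {u v : List X} (h : llt u v) : ¬ llt v u :=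
  fun h' => llt_irrefl u (llt_trans h h')

lemma llt_of_llt_of_not_llt {a b c : List X} (hab : llt a b) (hcb : ¬ llt c b) : llt a c := by
  rcases llt_trichotomy b c with hbc | rfl | hcb'
  · exact llt_trans hab hbc
  · exact hab
  · exact absurd hcb' hcb

lemma llt_of_not_llt_of_llt {a b c : List X} (hba : ¬ llt b a) (hbc : llt b c) : llt a c := by
  rcases llt_trichotomy a b with hab | rfl | hba'
  · exact llt_trans hab hbc
  · exact hbc
  · exact absurd hba' hba

lemma not_llt_trans {a b c : List X} (hba : ¬ llt b a) (hcb : ¬ llt c b) : ¬ llt c a :=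
  fun hca => hcb (llt_of_llt_of_not_llt hca hba)

lemma llt_append_self : ∀ (u : List X) {t : List X}, t ≠ [] → llt (u ++ t) u
  | [], t, ht => by
    obtain ⟨a, t, rfl⟩ := List.exists_cons_of_ne_nil ht
    trivial
  | _ :: u, _, ht => Or.inr ⟨rfl, llt_append_self u ht⟩

lemma not_llt_of_prefix {a b : List X} (h : a <+: b) : ¬ llt a b := by
  obtain ⟨z, rfl⟩ := h
  rcases eq_or_ne z [] with rfl | hz
  · simpa using llt_irrefl a
  · exact llt_asymm (llt_append_self a hz)

lemma llt_append_left_iff : ∀ (c : List X) {a b : List X}, llt (c ++ a) (c ++ b) ↔ llt a b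
  | [], _, _ => Iff.rfl
  | x :: c, _, _ => by
    simp only [List.cons_append]
    exact ⟨fun h => h.elim (absurd · (lt_irrefl x)) fun h => (llt_append_left_iff c).1 h.2,
      fun h => Or.inr ⟨rfl, (llt_append_left_iff c).2 h⟩⟩

lemma llt_append_of_length_eq : ∀ {u z : List X}, u.length = z.length → llt u z →
    ∀ p q : List X, llt (u ++ p) (z ++ q)
  | [], _, _, h, _, _ => absurd h (not_llt_nil _)
  | _ :: _, [], h, _, _, _ => by simp at h
  | _ :: _, _ :: _, hl, h, p, q => by
    rcases h with h | ⟨rfl, h⟩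
    · exact Or.inl h
    · exact Or.inr ⟨rfl, llt_append_of_length_eq (by simpa using hl) h p q⟩

lemma llt_append_of_llt_of_not_prefix : ∀ {a b : List X}, llt a b → ¬ b <+: a →
    ∀ c : List X, llt a (b ++ c)
  | [], _, h, _, _ => absurd h (not_llt_nil _)
  | _ :: _, [], _, hp, _ => absurd List.nil_prefix hp
  | _ :: _, _ :: _, h, hp, c => by
    rcases h with h | ⟨rfl, h⟩
    · exact Or.inl h
    · exact Or.inr ⟨rfl, llt_append_of_llt_of_not_prefix h
        (fun hb => hp (List.cons_prefix_cons.mpr ⟨rfl, hb⟩)) c⟩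

lemma IsLS.not_llt_of_suffix {v s : List X} (hv : IsLS v) (h : s <:+ v) (hs : s ≠ []) :
    ¬ llt v s := by
  obtain ⟨u, rfl⟩ := h
  rcases eq_or_ne u [] with rfl | hu
  · exact llt_irrefl _
  intro hvs
  have hrot : llt (s ++ u) (u ++ s) := hv.2 u s hu hs rfl
  by_cases hpre : s <+: u ++ s
  · obtain ⟨z, hz⟩ := hpre
    have hz0 : z ≠ [] := by
      rintro rfl
      rw [List.append_nil] at hz
      rw [← hz] at hvs
      exact llt_irrefl s hvs
    -- the rotations `s ++ u` and `z ++ s` of `u ++ s = s ++ z` are both below it; the first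
    -- gives `u < z`, hence `u ++ s < z ++ s` as `u` and `z` have the same length
    have huz : llt u z := (llt_append_left_iff s).1 (hz ▸ hrot)
    have hlen : u.length = z.length := by
      have := congrArg List.length hz
      simp only [List.length_append] at this
      omega
    exact llt_asymm (hv.2 s z hs hz0 hz.symm) (hz ▸ llt_append_of_length_eq hlen huz s s)
  · exact llt_asymm hrot (llt_append_of_llt_of_not_prefix hvs hpre u)

lemma IsLS.not_prefix_flatten_of_forall_llt {v u t : List X} (hv : IsLS v) (hvt : v = u ++ t)
    (hu : u ≠ []) (ht : t ≠ []) {ds : List (List X)} (hds : ∀ d ∈ ds, llt v d) :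
    ¬ t <+: ds.flatten := by
  induction ds generalizing u t with
  | nil => simpa using ht
  | cons d ds ih =>
    have htv : ¬ llt v t := hv.not_llt_of_suffix ⟨u, hvt.symm⟩ ht
    have htd : llt t d := llt_of_not_llt_of_llt htv (hds d List.mem_cons_self)
    rintro ⟨z, hz⟩
    rw [List.flatten_cons, List.append_eq_append_iff] at hz
    rcases hz with ⟨a, rfl, -⟩ | ⟨t', rfl, hds'⟩
    · exact not_llt_of_prefix (List.prefix_append t a) htd
    · have ht' : t' ≠ [] := by
        rintro rfl
        exact llt_irrefl d (by simpa using htd)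
      exact ih (u := u ++ d) (by simp [hvt]) (by simp [hu]) ht'
        (fun e he => hds e (List.mem_cons_of_mem d he)) ⟨z, hds'.symm⟩

lemma IsLS.exists_infix_of_infix_flatten {v : List X} (hv : IsLS v) {cs : List (List X)}
    (hcs : ∀ c ∈ cs, IsLS c) (hsort : cs.Pairwise fun p q => ¬ llt q p)
    (h : v <:+: cs.flatten) : ∃ c ∈ cs, v <:+: c := by
  induction cs with
  | nil => exact absurd (List.eq_nil_of_infix_nil h) hv.1
  | cons c cs ih =>
    have ih' (h' : v <:+: cs.flatten) : ∃ d ∈ c :: cs, v <:+: d := by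
      obtain ⟨d, hd, hvd⟩ := ih (fun d hd => hcs d (List.mem_cons_of_mem c hd))
        (List.pairwise_cons.1 hsort).2 h'
      exact ⟨d, List.mem_cons_of_mem c hd, hvd⟩
    obtain ⟨x, y, hxy⟩ := h
    rw [List.flatten_cons, List.append_assoc, eq_comm, List.append_eq_append_iff] at hxy
    rcases hxy with ⟨x', rfl, hF⟩ | ⟨s, rfl, hvy⟩
    · exact ih' ⟨x', y, by simp [hF]⟩
    rw [List.append_eq_append_iff] at hvy
    rcases hvy with ⟨q, rfl, -⟩ | ⟨t, rfl, hF⟩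
    · exact ⟨_, List.mem_cons_self, x, q, by simp⟩
    rcases eq_or_ne s [] with rfl | hs
    · exact ih' ⟨[], y, by simp [hF]⟩
    rcases eq_or_ne t [] with rfl | ht
    · exact ⟨_, List.mem_cons_self, x, [], by simp⟩
    -- `v = s ++ t` straddles `c = x ++ s` and the later factors, and `v < s ≤ c`
    exfalso
    have hvc : llt (s ++ t) (x ++ s) :=
      llt_of_llt_of_not_llt (llt_append_self s ht)
        ((hcs _ List.mem_cons_self).not_llt_of_suffix (List.suffix_append x s) hs)
    refine hv.not_prefix_flatten_of_forall_llt rfl hs ht (fun d hd => ?_) ⟨y, hF.symm⟩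
    exact llt_of_llt_of_not_llt hvc ((List.pairwise_cons.1 hsort).1 d hd)

/-- If `w = c_1 ++ ... ++ c_n` is the Lyndon factorization of `w`
(each `c_i` Lyndon--Shirshov, `c_1 ≤ ... ≤ c_n`) and a Lyndon--Shirshov word `v`
occurs as a contiguous subword of `w`, then `v` is a subword of some single
factor `c_i`. -/
theorem stmt_4 {w v : List X} {cs : List (List X)}
    (hcs : ∀ c ∈ cs, IsLS c) (hsort : List.Chain' (fun p q => ¬ llt q p) cs)
    (hw : cs.flatten = w) (hv : IsLS v) {x y : List X} (hocc : w = x ++ v ++ y) :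
    ∃ c ∈ cs, ∃ p q : List X, c = p ++ v ++ q := by
  have hpair : cs.Pairwise fun p q => ¬ llt q p :=
    @List.IsChain.pairwise _ _ _ ⟨not_llt_trans⟩ hsort
  obtain ⟨c, hc, p, q, hpq⟩ :=
    hv.exists_infix_of_infix_flatten hcs hpair ⟨x, y, by rw [hw, hocc]⟩
  exact ⟨c, hc, p, q, hpq.symm⟩
end

section
/- In the free Lie algebra over a field k on a linearly ordered set X, the set of nonassociative Lyndon–Shirshov words (evaluated via the commutator bracketing in the free associative algebra) forms a linear basis. -/
/-!
Each NLS word `t` evaluates to its associative word `mword t` plus lexicographically smaller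
words of the same length. An associative word has at most one NLS bracketing: a Lyndon–Shirshov
word starting strictly inside the word of an NLS tree is bounded by the word of its right factor,
which rules out two splittings with right factors of different lengths. Hence the evaluations
have pairwise distinct leading words and are linearly independent.

For spanning it suffices that their span is closed under the bracket. For NLS words `s`, `r`
with `r < s`, either `(s r)` is itself an NLS word, or `s = (s₁ s₂)` with `r < s₂`, and the
Jacobi identity `⁅⁅s₁, s₂⁆, r⁆ = ⁅s₁, ⁅s₂, r⁆⁆ - ⁅s₂, ⁅s₁, r⁆⁆` rewrites `⁅s, r⁆` through brackets
of NLS words that are shorter, or whose words are lexicographically smaller rearrangements of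
`s r`, or that have the same word and a shorter left factor (Shirshov). Every evaluation so
produced has a word that is a rearrangement of `s r` not above it.
-/

noncomputable section

variable {X : Type*} [LinearOrder X] (k : Type*) [Field k]

attribute [local instance] LieRing.ofAssociativeRing

/-- deg-lex order -/
def dlt (u v : List X) : Prop :=
  u.length < v.length ∨ (u.length = v.length ∧ llt u v)

/-- the free associative algebra with basis the free monoid on X -/
abbrev FA (k : Type*) [Field k] (X : Type*) := MonoidAlgebra k (FreeMonoid X)

/-- the generators x ∈ X inside the free associative algebra -/
def gens : Set (FA k X) := Set.range fun x : X => MonoidAlgebra.single (FreeMonoid.of x) (1 : k)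

/-- the leading (deg-lex maximal) monomial of f is w -/
def IsLeading (f : FA k X) (w : List X) : Prop :=
  f.coeff (FreeMonoid.ofList w) ≠ 0 ∧ ∀ v : List X, f.coeff (FreeMonoid.ofList v) ≠ 0 → v = w ∨ dlt v w

/-- underlying associative word of a nonassociative word -/
def mword : FreeMagma X → List X
  | .of x => [x]
  | .mul a b => mword a ++ mword b

/-- evaluation of a nonassociative word in the free associative algebra
via the commutator bracket -/
def evalM : FreeMagma X → FA k X
  | .of x => MonoidAlgebra.single (FreeMonoid.of x) 1
  | .mul a b => evalM a * evalM b - evalM b * evalM a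

/-- nonassociative Lyndon--Shirshov word -/
def IsNLS : FreeMagma X → Prop
  | .of _ => True
  | .mul a b => IsNLS a ∧ IsNLS b ∧ IsLS (mword a ++ mword b) ∧
      (match a with
        | .of _ => True
        | .mul _ a2 => ¬ llt (mword b) (mword a2))

/-- standard bracketing tree: at each node the right factor is the longest
proper Lyndon--Shirshov suffix -/
def IsStd : FreeMagma X → Prop
  | .of _ => True
  | .mul a b => IsStd a ∧ IsStd b ∧ IsLS (mword a ++ mword b) ∧ IsLS (mword b) ∧
      ∀ s : List X, s ≠ [] → s ≠ mword a ++ mword b → s <:+ mword a ++ mword b →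
        IsLS s → s.length ≤ (mword b).length

/-- flattening of a tree of trees -/
def mjoin : FreeMagma (FreeMagma X) → FreeMagma X
  | .of t => t
  | .mul a b => .mul (mjoin a) (mjoin b)

/-- the list of leaves of a binary tree -/
def leaves {α : Type*} : FreeMagma α → List α
  | .of x => [x]
  | .mul a b => leaves a ++ leaves b

/-- `Occurs s t p` : `s` occurs as a subtree of `t` with exactly the word `p`
to its left -/
def Occurs (s : FreeMagma X) : FreeMagma X → List X → Prop
  | .of x, p => s = .of x ∧ p = []
  | .mul l r, p => (s = .mul l r ∧ p = []) ∨ Occurs s l p ∨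
      ∃ q, Occurs s r q ∧ p = mword l ++ q

section LieSpan

variable {R L : Type*} [CommRing R] [LieRing L] [LieAlgebra R L]

lemma lie_mem_of_mem_span {s : Set L} {p : Submodule R L} {g z : L}
    (hz : z ∈ Submodule.span R s) (H : ∀ y ∈ s, ⁅g, y⁆ ∈ p) : ⁅g, z⁆ ∈ p :=
  (Submodule.span_le (p := p.comap (LieAlgebra.ad R L g : Module.End R L))).mpr H hz

lemma LieSubalgebra.coe_lieSpan_eq_span_of_forall_lie_mem {s : Set L}
    (hs : ∀ x ∈ s, ∀ y ∈ s, ⁅x, y⁆ ∈ Submodule.span R s) :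
    (LieSubalgebra.lieSpan R L s : Submodule R L) = Submodule.span R s := by
  have hlie {x y : L} (hx : x ∈ Submodule.span R s) (hy : y ∈ Submodule.span R s) :
      ⁅x, y⁆ ∈ Submodule.span R s := by
    rw [← lie_skew]
    refine neg_mem (lie_mem_of_mem_span hx fun x' hx' => ?_)
    rw [← lie_skew]
    exact neg_mem (lie_mem_of_mem_span hy fun y' hy' => hs x' hx' y' hy')
  refine le_antisymm ?_ LieSubalgebra.submodule_span_le_lieSpan
  change _ ≤ ({ Submodule.span R s with lie_mem' := hlie } : LieSubalgebra R L)
  rw [LieSubalgebra.lieSpan_le]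
  exact Submodule.subset_span

end LieSpan

namespace LyndonShirshov

/-- `u < v` decided at a letter, so that neither word is a prefix of the other. -/
def lltLetter : List X → List X → Prop
  | a :: u, b :: v => a < b ∨ (a = b ∧ lltLetter u v)
  | _, _ => False

def lle (u v : List X) : Prop := llt u v ∨ u = v

@[simp] lemma llt_nil_left (v : List X) : ¬ llt [] v := by cases v <;> simp [llt]

@[simp] lemma llt_nil_right (a : X) (u : List X) : llt (a :: u) [] := by simp [llt]

@[simp] lemma lltLetter_nil_left (v : List X) : ¬ lltLetter [] v := by cases v <;> simp [lltLetter]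

@[simp] lemma lltLetter_nil_right (u : List X) : ¬ lltLetter u [] := by
  cases u <;> simp [lltLetter]

lemma lltLetter.llt : ∀ {u v : List X}, lltLetter u v → llt u v
  | _ :: _, _ :: _, .inl h => .inl h
  | _ :: _, _ :: _, .inr ⟨rfl, h⟩ => .inr ⟨rfl, h.llt⟩

lemma llt_irrefl : ∀ u : List X, ¬ llt u u
  | [] => by simp
  | a :: u => by
    rintro (h | ⟨-, h⟩)
    exacts [lt_irrefl a h, llt_irrefl u h]

lemma lltLetter_irrefl (u : List X) : ¬ lltLetter u u := fun h => llt_irrefl u h.llt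

lemma llt_trans : ∀ {u v w : List X}, llt u v → llt v w → llt u w
  | _, [], _, _, h' => by simp at h'
  | [], _, _, h, _ => by simp at h
  | _ :: _, _ :: _, [], _, _ => by simp
  | _ :: _, _ :: _, _ :: _, h, h' => by
    rcases h with h | ⟨rfl, h⟩ <;> rcases h' with h' | ⟨rfl, h'⟩
    exacts [.inl (h.trans h'), .inl h, .inl h', .inr ⟨rfl, llt_trans h h'⟩]

lemma lltLetter_trans : ∀ {u v w : List X}, lltLetter u v → lltLetter v w → lltLetter u w
  | _, [], _, h, _ => by simp at h
  | [], _, _, h, _ => by simp at h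
  | _ :: _, _ :: _, [], _, h' => by simp at h'
  | _ :: _, _ :: _, _ :: _, h, h' => by
    rcases h with h | ⟨rfl, h⟩ <;> rcases h' with h' | ⟨rfl, h'⟩
    exacts [.inl (h.trans h'), .inl h, .inl h', .inr ⟨rfl, lltLetter_trans h h'⟩]

lemma llt_trichotomy : ∀ u v : List X, llt u v ∨ u = v ∨ llt v u
  | [], [] => .inr (.inl rfl)
  | [], _ :: _ => .inr (.inr (by simp))
  | _ :: _, [] => .inl (by simp)
  | a :: u, b :: v => by
    rcases lt_trichotomy a b with h | rfl | h
    · exact .inl (.inl h)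
    · rcases llt_trichotomy u v with h | rfl | h
      exacts [.inl (.inr ⟨rfl, h⟩), .inr (.inl rfl), .inr (.inr (.inr ⟨rfl, h⟩))]
    · exact .inr (.inr (.inl h))

lemma not_llt_iff_lle {u v : List X} : ¬ llt u v ↔ lle v u := by
  constructor
  · intro h
    rcases llt_trichotomy u v with h' | rfl | h'
    exacts [absurd h' h, .inr rfl, .inl h']
  · rintro (h | rfl) h'
    exacts [llt_irrefl _ (llt_trans h h'), llt_irrefl _ h']

lemma lle.trans_llt {u v w : List X} (h : lle u v) (h' : llt v w) : llt u w := by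
  rcases h with h | rfl
  exacts [llt_trans h h', h']

lemma lle.trans {u v w : List X} (h : lle u v) (h' : lle v w) : lle u w := by
  rcases h' with h' | rfl
  exacts [.inl (h.trans_llt h'), h]

lemma llt_append_self : ∀ (u : List X) {w : List X}, w ≠ [] → llt (u ++ w) u
  | [], _ :: _, _ => by simp
  | _ :: u, _, hw => .inr ⟨rfl, llt_append_self u hw⟩

lemma llt_append_left_iff : ∀ (c : List X) {u v : List X}, llt (c ++ u) (c ++ v) ↔ llt u v
  | [] , _, _ => Iff.rfl
  | a :: c, _, _ => by simpa [llt] using llt_append_left_iff c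

lemma lle_append_left (c : List X) {u v : List X} (h : lle u v) : lle (c ++ u) (c ++ v) := by
  rcases h with h | rfl
  exacts [.inl ((llt_append_left_iff c).mpr h), .inr rfl]

lemma lltLetter_append_left_iff :
    ∀ (c : List X) {u v : List X}, lltLetter (c ++ u) (c ++ v) ↔ lltLetter u v
  | [], _, _ => Iff.rfl
  | a :: c, _, _ => by simpa [lltLetter] using lltLetter_append_left_iff c

lemma lltLetter.append : ∀ {u v : List X} (w w' : List X), lltLetter u v →
    lltLetter (u ++ w) (v ++ w')
  | _ :: _, _ :: _, _, _, .inl h => .inl h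
  | _ :: _, _ :: _, w, w', .inr ⟨rfl, h⟩ => .inr ⟨rfl, h.append w w'⟩

lemma llt_iff_lltLetter_of_length_le :
    ∀ {u v : List X}, u.length ≤ v.length → (llt u v ↔ lltLetter u v)
  | [], _, _ => by simp
  | _ :: _, [], h => by simp at h
  | a :: u, b :: v, h => by
    simp only [llt, lltLetter, llt_iff_lltLetter_of_length_le (Nat.le_of_succ_le_succ h)]

lemma lltLetter_append_split : ∀ {u v s t : List X}, u.length = v.length →
    lltLetter (u ++ s) (v ++ t) → lltLetter u v ∨ (u = v ∧ lltLetter s t)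
  | [], [], _, _, _, h => .inr ⟨rfl, h⟩
  | a :: u, b :: v, s, t, hl, h => by
    rcases h with h | ⟨rfl, h⟩
    · exact .inl (.inl h)
    · rcases lltLetter_append_split (Nat.succ.inj hl) h with h' | ⟨rfl, h'⟩
      exacts [.inl (.inr ⟨rfl, h'⟩), .inr ⟨rfl, h'⟩]

lemma llt_iff : ∀ {u v : List X}, llt u v ↔ lltLetter u v ∨ (v <+: u ∧ v ≠ u)
  | [], v => by simp [List.prefix_nil]
  | a :: u, [] => by simp
  | a :: u, b :: v => by
    simp only [llt, lltLetter, List.cons_prefix_cons, llt_iff (u := u), ne_eq, List.cons.injEq]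
    grind

lemma not_lltLetter_append_self : ∀ (v u : List X), ¬ lltLetter (v ++ u) v
  | [], _ => by simp
  | a :: v, u => by
    rintro (h | ⟨-, h⟩)
    exacts [lt_irrefl a h, not_lltLetter_append_self v u h]

lemma isLS_singleton (x : X) : IsLS [x] := by
  refine ⟨by simp, fun u v hu hv he => ?_⟩
  rcases u with _ | ⟨a, _ | ⟨b, u⟩⟩ <;> simp_all

lemma _root_.IsLS.rotate_lltLetter {w u v : List X} (h : IsLS w) (hu : u ≠ []) (hv : v ≠ [])
    (he : w = u ++ v) : lltLetter (v ++ u) w :=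
  (llt_iff_lltLetter_of_length_le (by simp [he, Nat.add_comm])).mp (h.2 u v hu hv he)

lemma _root_.IsLS.unbordered {w v z y : List X} (h : IsLS w) (h1 : w = v ++ z)
    (h2 : w = y ++ v) (hv : v ≠ []) (hz : z ≠ []) : False := by
  have hy : y ≠ [] := by
    rintro rfl
    rw [List.nil_append] at h2
    subst h2
    exact hz (List.self_eq_append_right.mp h1)
  have hlen : z.length = y.length := by
    have := congrArg List.length (h1.symm.trans h2)
    simp only [List.length_append] at this
    omega
  have rot1 : lltLetter (z ++ v) (y ++ v) := h2 ▸ h.rotate_lltLetter hv hz h1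
  have rot2 : lltLetter y z := by
    simpa [h1, lltLetter_append_left_iff] using h.rotate_lltLetter hy hv h2
  rcases lltLetter_append_split hlen rot1 with h' | ⟨rfl, h'⟩
  exacts [lltLetter_irrefl y (lltLetter_trans rot2 h'), lltLetter_irrefl v h']

lemma _root_.IsLS.suffix_lltLetter {w u v : List X} (h : IsLS w) (he : w = u ++ v)
    (hu : u ≠ []) (hv : v ≠ []) : lltLetter v w := by
  have hlen : v.length < w.length := by
    simpa [he] using List.length_pos_iff.mpr hu
  rcases llt_trichotomy v w with h' | rfl | h'
  · exact (llt_iff_lltLetter_of_length_le hlen.le).mp h'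
  · exact absurd hlen (lt_irrefl _)
  · rcases llt_iff.mp h' with h' | ⟨⟨z, hz⟩, hne⟩
    · exact absurd (lltLetter_trans (h.rotate_lltLetter hu hv he) h')
        (not_lltLetter_append_self v u)
    · refine (h.unbordered hz.symm he hv ?_).elim
      rintro rfl
      exact hne (by simpa using hz)

lemma lltLetter_append_cases : ∀ (u x y : List X), lltLetter x (u ++ y) →
    lltLetter x u ∨ ∃ x', x = u ++ x' ∧ lltLetter x' y
  | [], x, _, h => .inr ⟨x, rfl, h⟩
  | _ :: _, [], _, h => by simp at h
  | a :: u, c :: x, y, h => by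
    rcases h with h | ⟨rfl, h⟩
    · exact .inl (.inl h)
    · rcases lltLetter_append_cases u x y h with h' | ⟨x', rfl, h'⟩
      exacts [.inl (.inr ⟨rfl, h'⟩), .inr ⟨x', rfl, h'⟩]

lemma lltLetter_append_comm_of_lltLetter {u : List X} (hu : u ≠ []) :
    ∀ {z : List X}, lltLetter z (u ++ z) → lltLetter (z ++ u) (u ++ z)
  | z, h => by
    rcases lltLetter_append_cases u z z h with h' | ⟨z', rfl, h'⟩
    · exact h'.append u z
    · have : z'.length < (u ++ z').length := by simpa using List.length_pos_iff.mpr hu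
      simpa [lltLetter_append_left_iff] using lltLetter_append_comm_of_lltLetter hu h'
  termination_by z => z.length

lemma _root_.IsLS.append_lltLetter_append {u v : List X} (hu : IsLS u) (hv : IsLS v)
    (h : llt v u) : lltLetter (v ++ u) (u ++ v) := by
  rcases llt_iff.mp h with h' | ⟨⟨v₂, rfl⟩, hne⟩
  · exact h'.append u v
  · have hv₂ : v₂ ≠ [] := by rintro rfl; exact hne (by simp)
    simpa [lltLetter_append_left_iff] using
      lltLetter_append_comm_of_lltLetter hu.1 (hv.suffix_lltLetter rfl hu.1 hv₂)

lemma _root_.IsLS.lltLetter_append_of_llt {u v : List X} (hv : IsLS v) (hu : u ≠ [])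
    (h : llt v u) (x y : List X) : lltLetter (v ++ x) (u ++ v ++ y) := by
  rcases llt_iff.mp h with h | ⟨⟨c, rfl⟩, hne⟩
  · simpa using h.append x (v ++ y)
  · have hc : c ≠ [] := by rintro rfl; exact hne (by simp)
    simpa [lltLetter_append_left_iff] using (hv.suffix_lltLetter rfl hu hc).append x y

theorem _root_.IsLS.append {u v : List X} (hu : IsLS u) (hv : IsLS v) (h : llt v u) :
    IsLS (u ++ v) := by
  refine ⟨by simp [hu.1], fun p q hp hq he => ?_⟩
  have hvu := hu.append_lltLetter_append hv h
  rcases List.append_eq_append_iff.mp he.symm with ⟨a', rfl, rfl⟩ | ⟨c', rfl, rfl⟩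
  · rcases eq_or_ne a' [] with rfl | ha
    · simpa using hvu.llt
    · simpa using ((hu.suffix_lltLetter rfl hp ha).append (v ++ p) v).llt
  · rcases eq_or_ne c' [] with rfl | hc
    · simpa using hvu.llt
    · have h1 := (hv.suffix_lltLetter rfl hc hq).append (u ++ c') u
      simpa using (lltLetter_trans h1 hvu).llt

omit [LinearOrder X] in
@[simp] lemma mword_of (x : X) : mword (.of x) = [x] := rfl

omit [LinearOrder X] in
@[simp] lemma mword_mul (a b : FreeMagma X) : mword (a.mul b) = mword a ++ mword b := rfl

omit [LinearOrder X] in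
lemma mword_ne_nil : ∀ t : FreeMagma X, mword t ≠ []
  | .of _ => by simp [mword]
  | .mul a _ => by simp [mword, mword_ne_nil a]

omit [LinearOrder X] in
lemma mword_length_pos (t : FreeMagma X) : 0 < (mword t).length :=
  List.length_pos_iff.mpr (mword_ne_nil t)

lemma _root_.IsNLS.left {a b : FreeMagma X} (h : IsNLS (a.mul b)) : IsNLS a := h.1

lemma _root_.IsNLS.right {a b : FreeMagma X} (h : IsNLS (a.mul b)) : IsNLS b := h.2.1

lemma _root_.IsNLS.not_llt_right_right {a₁ a₂ b : FreeMagma X}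
    (h : IsNLS ((a₁.mul a₂).mul b)) : ¬ llt (mword b) (mword a₂) := h.2.2.2

lemma _root_.IsNLS.isLS : ∀ {t : FreeMagma X}, IsNLS t → IsLS (mword t)
  | .of x, _ => isLS_singleton x
  | .mul _ _, h => h.2.2.1

lemma _root_.IsNLS.right_lltLetter {a b : FreeMagma X} (h : IsNLS (a.mul b)) :
    lltLetter (mword b) (mword a ++ mword b) :=
  h.isLS.suffix_lltLetter rfl (mword_ne_nil a) (mword_ne_nil b)

lemma _root_.IsNLS.swap_llt {a b : FreeMagma X} (h : IsNLS (a.mul b)) :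
    llt (mword b ++ mword a) (mword a ++ mword b) := by
  simpa only [List.append_nil] using (h.right_lltLetter.append (mword a) []).llt

lemma _root_.IsNLS.right_llt_left {a b : FreeMagma X} (h : IsNLS (a.mul b)) :
    llt (mword b) (mword a) :=
  llt_trans h.right_lltLetter.llt (llt_append_self _ (mword_ne_nil b))

lemma _root_.IsNLS.exists_le_right_of_suffix : ∀ {a : FreeMagma X} {c z : List X}, IsNLS a →
    c ≠ [] → c ≠ mword a → c <:+ mword a → z ≠ [] → IsLS (c ++ z) →
    ∃ a₁ a₂ : FreeMagma X, a = a₁.mul a₂ ∧ lle (c ++ z) (mword a₂)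
  | .of _, c, _, _, hc, hca, hsuf, _, _ => by
    have := hsuf.length_le
    have := List.length_pos_iff.mpr hc
    exact absurd (hsuf.eq_of_length (by simp_all [mword]; omega)) hca
  | .mul a₁ a₂, c, z, hN, hc, hca, ⟨w, hw⟩, hz, hLS => by
    refine ⟨a₁, a₂, rfl, ?_⟩
    rw [mword_mul] at hw hca
    rcases List.append_eq_append_iff.mp hw with ⟨e, hwe, rfl⟩ | ⟨d, rfl, hd⟩
    · rcases eq_or_ne e [] with rfl | he
      · exact .inl (by simpa using llt_append_self (mword a₂) hz)
      · have hne : e ≠ mword a₁ := by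
          rintro rfl
          simp_all
        obtain ⟨b₁, b₂, rfl, hle⟩ := hN.left.exists_le_right_of_suffix (z := mword a₂ ++ z) he hne
          ⟨w, hwe.symm⟩ (by simp [mword_ne_nil]) (by simpa using hLS)
        simpa using hle.trans (not_llt_iff_lle.mp hN.not_llt_right_right)
    · rcases eq_or_ne d [] with rfl | hd'
      · rw [List.nil_append] at hd
        exact .inl (hd ▸ llt_append_self c hz)
      · have hne : c ≠ mword a₂ := by
          rintro rfl
          exact hd' (by simpa using hd.symm)
        obtain ⟨b₁, b₂, rfl, hle⟩ :=
          hN.right.exists_le_right_of_suffix hc hne ⟨d, hd.symm⟩ hz hLS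
        exact .inl (hle.trans_llt hN.right.right_lltLetter.llt)

lemma _root_.IsNLS.length_right_le_of_mword_eq {a b a' b' : FreeMagma X} (h : IsNLS (a.mul b))
    (h' : IsNLS (a'.mul b')) (he : mword a ++ mword b = mword a' ++ mword b') :
    (mword b).length ≤ (mword b').length := by
  by_contra! hlen
  rcases List.append_eq_append_iff.mp he with ⟨c, hc1, hc2⟩ | ⟨c, -, hc2⟩
  · have hc : c ≠ [] := by
      rintro rfl
      simp [hc2] at hlen
    have hca : c ≠ mword a' := by
      rintro rfl
      exact mword_ne_nil a (by simpa using hc1)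
    obtain ⟨x₁, x₂, rfl, hle⟩ := h'.left.exists_le_right_of_suffix hc hca ⟨mword a, hc1.symm⟩
      (mword_ne_nil b') (hc2 ▸ h.right.isLS)
    have hb'b : lltLetter (mword b') (mword b) :=
      h.right.isLS.suffix_lltLetter hc2 hc (mword_ne_nil b')
    rw [← hc2] at hle
    exact llt_irrefl _ ((hle.trans (not_llt_iff_lle.mp h'.not_llt_right_right)).trans_llt hb'b.llt)
  · have := congrArg List.length hc2
    simp only [List.length_append] at this
    omega

theorem _root_.IsNLS.eq_of_mword_eq : ∀ {t t' : FreeMagma X}, IsNLS t → IsNLS t' →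
    mword t = mword t' → t = t'
  | .of x, .of y, _, _, he => by rw [show x = y by simpa using he]
  | .of _, .mul a b, _, _, he | .mul a b, .of _, _, _, he => by
    have hl := congrArg List.length he
    simp only [mword_of, mword_mul, List.length_append, List.length_singleton] at hl
    have := mword_length_pos a
    have := mword_length_pos b
    omega
  | .mul a b, .mul a' b', h, h', he => by
    have hlen : (mword b).length = (mword b').length :=
      le_antisymm (h.length_right_le_of_mword_eq h' he) (h'.length_right_le_of_mword_eq h he.symm)
    obtain ⟨e1, e2⟩ := List.append_inj' he hlen
    rw [h.left.eq_of_mword_eq h'.left e1, h.right.eq_of_mword_eq h'.right e2]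

section

variable {k}

def SupportedBelow (f : FA k X) (w : List X) : Prop :=
  ∀ p ∈ f.coeff.support, p.toList.length = w.length ∧ lle p.toList w

lemma lle_append_of_length_eq {x u y v : List X} (hxu : lle x u) (hlen : x.length = u.length)
    (hyv : lle y v) : lle (x ++ y) (u ++ v) := by
  rcases hxu with hxu | rfl
  · exact .inl (((llt_iff_lltLetter_of_length_le hlen.le).mp hxu).append y v).llt
  · rcases hyv with hyv | rfl
    exacts [.inl ((llt_append_left_iff x).mpr hyv), .inr rfl]

lemma SupportedBelow.mul {f g : FA k X} {u v : List X} (hf : SupportedBelow f u)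
    (hg : SupportedBelow g v) : SupportedBelow (f * g) (u ++ v) := by
  classical
  intro p hp
  obtain ⟨p₁, hp₁, p₂, hp₂, rfl⟩ :=
    Finset.mem_mul.mp (MonoidAlgebra.support_coeff_mul_subset f g hp)
  obtain ⟨hl₁, hle₁⟩ := hf p₁ hp₁
  obtain ⟨hl₂, hle₂⟩ := hg p₂ hp₂
  simp only [FreeMonoid.toList_mul, List.length_append, hl₁, hl₂, true_and]
  exact lle_append_of_length_eq hle₁ hl₁ hle₂

lemma SupportedBelow.sub {f g : FA k X} {w : List X} (hf : SupportedBelow f w)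
    (hg : SupportedBelow g w) : SupportedBelow (f - g) w := by
  classical
  intro p hp
  rcases Finset.mem_union.mp (Finsupp.support_sub hp) with hp | hp
  exacts [hf p hp, hg p hp]

lemma SupportedBelow.of_llt {f : FA k X} {v w : List X} (hf : SupportedBelow f v)
    (hvw : llt v w) (hlen : v.length = w.length) : SupportedBelow f w := fun p hp =>
  ⟨(hf p hp).1.trans hlen, .inl ((hf p hp).2.trans_llt hvw)⟩

lemma SupportedBelow.coeff_eq_zero {f : FA k X} {v w : List X} (hf : SupportedBelow f v)
    (hvw : llt v w) : f.coeff (FreeMonoid.ofList w) = 0 := by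
  by_contra h
  exact llt_irrefl _ ((hf _ (Finsupp.mem_support_iff.mpr h)).2.trans_llt hvw)

lemma SupportedBelow.coeff_mul {f : FA k X} (g : FA k X) {u : List X} (hf : SupportedBelow f u)
    (v : List X) : (f * g).coeff (FreeMonoid.ofList (u ++ v)) =
      f.coeff (FreeMonoid.ofList u) * g.coeff (FreeMonoid.ofList v) := by
  refine MonoidAlgebra.coeff_mul_mul_of_uniqueMul fun p q hp _ hpq => ?_
  have hpq' := congrArg FreeMonoid.toList hpq
  simp only [FreeMonoid.toList_mul] at hpq'
  obtain ⟨h₁, h₂⟩ := List.append_inj hpq' (hf p hp).1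
  exact ⟨FreeMonoid.toList.injective h₁, FreeMonoid.toList.injective h₂⟩

lemma _root_.IsNLS.supportedBelow_evalM : ∀ {t : FreeMagma X}, IsNLS t →
    SupportedBelow (evalM k t) (mword t)
  | .of x, _ => by
    intro p hp
    simp only [evalM, MonoidAlgebra.coeff_single, ne_eq, one_ne_zero, not_false_eq_true,
      Finsupp.support_single, Finset.mem_singleton] at hp
    simp [hp, lle]
  | .mul a b, h => by
    have ha : SupportedBelow (evalM k a) (mword a) := h.left.supportedBelow_evalM
    have hb : SupportedBelow (evalM k b) (mword b) := h.right.supportedBelow_evalM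
    exact (ha.mul hb).sub ((hb.mul ha).of_llt h.swap_llt (by simp [Nat.add_comm]))

lemma _root_.IsNLS.coeff_evalM_mword : ∀ {t : FreeMagma X}, IsNLS t →
    (evalM k t).coeff (FreeMonoid.ofList (mword t)) = 1
  | .of x, _ => by simp [evalM]
  | .mul a b, h => by
    have ha : SupportedBelow (evalM k a) (mword a) := h.left.supportedBelow_evalM
    have hb : SupportedBelow (evalM k b) (mword b) := h.right.supportedBelow_evalM
    simp only [evalM, mword_mul, MonoidAlgebra.coeff_sub, Finsupp.sub_apply,
      ha.coeff_mul, h.left.coeff_evalM_mword, h.right.coeff_evalM_mword,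
      (hb.mul ha).coeff_eq_zero h.swap_llt, mul_one, sub_zero]

end

lemma exists_forall_lle_of_nonempty {s : Finset (List X)} (hs : s.Nonempty) :
    ∃ w ∈ s, ∀ v ∈ s, lle v w := by
  induction hs using Finset.Nonempty.cons_induction with
  | singleton a => exact ⟨a, by simp, by simp [lle]⟩
  | cons a s _ _ ih =>
    obtain ⟨w, hw, hmax⟩ := ih
    by_cases haw : llt a w
    · refine ⟨w, by simp [hw], fun v hv => ?_⟩
      rcases Finset.mem_cons.mp hv with rfl | hv
      exacts [.inl haw, hmax v hv]
    · refine ⟨a, by simp, fun v hv => ?_⟩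
      rcases Finset.mem_cons.mp hv with rfl | hv
      exacts [.inr rfl, (hmax v hv).trans (not_llt_iff_lle.mp haw)]

theorem linearIndependent_evalM :
    LinearIndependent k (fun t : {t : FreeMagma X // IsNLS t} => evalM k t.1) := by
  classical
  rw [linearIndependent_iff]
  intro l hl
  by_contra hne
  obtain ⟨w, hw, hmax⟩ := exists_forall_lle_of_nonempty
    ((Finsupp.support_nonempty_iff.mpr hne).image fun t => mword t.1)
  obtain ⟨t₀, ht₀, rfl⟩ := Finset.mem_image.mp hw
  have hcoeff := congrArg (fun f : FA k X => f.coeff (FreeMonoid.ofList (mword t₀.1))) hl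
  simp only [Finsupp.linearCombination_apply, Finsupp.sum, MonoidAlgebra.coeff_sum,
    Finset.sum_apply', MonoidAlgebra.coeff_smul_apply, smul_eq_mul] at hcoeff
  rw [Finset.sum_eq_single t₀ _ (fun h => absurd ht₀ h), t₀.2.coeff_evalM_mword, mul_one] at hcoeff
  · exact Finsupp.mem_support_iff.mp ht₀ hcoeff
  intro t ht htt₀
  have hlt : llt (mword t.1) (mword t₀.1) := by
    rcases hmax _ (Finset.mem_image_of_mem _ ht) with hlt | heq
    exacts [hlt, absurd (Subtype.ext (t.2.eq_of_mword_eq t₀.2 heq)) htt₀]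
  rw [t.2.supportedBelow_evalM.coeff_eq_zero hlt, mul_zero]

def permRank (W : List X) : ℕ := {U | U.Perm W ∧ llt U W}.ncard

lemma permRank_lt {V W : List X} (hp : V.Perm W) (h : llt V W) : permRank V < permRank W := by
  refine Set.ncard_lt_ncard ?_ (W.permutations.toFinset.finite_toSet.subset fun U hU =>
    List.mem_toFinset.mpr (List.mem_permutations.mpr hU.1))
  refine ⟨fun U ⟨hU, hUV⟩ => ⟨hU.trans hp, llt_trans hUV h⟩, fun hsub => ?_⟩
  exact llt_irrefl V (hsub ⟨hp, h⟩).2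

def WordLT (V W : List X) : Prop := V.length < W.length ∨ (V.Perm W ∧ llt V W)

/-- The lexicographic order is not well founded, but it is on the finitely many rearrangements
of a word. -/
lemma wellFounded_wordLT : WellFounded (WordLT (X := X)) := by
  refine Subrelation.wf (fun {V W} h => ?_)
    (InvImage.wf (fun W => (W.length, permRank W)) (wellFounded_lt.prod_lex wellFounded_lt))
  rcases h with h | ⟨hp, h⟩
  · exact Prod.Lex.left _ _ h
  · simp only [InvImage, hp.length_eq]
    exact Prod.Lex.right _ (permRank_lt hp h)

def ReductionLT (p q : FreeMagma X × FreeMagma X) : Prop :=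
  WordLT (mword p.1 ++ mword p.2) (mword q.1 ++ mword q.2) ∨
    (mword p.1 ++ mword p.2 = mword q.1 ++ mword q.2 ∧ (mword p.1).length < (mword q.1).length)

lemma wellFounded_reductionLT : WellFounded (ReductionLT (X := X)) := by
  refine Subrelation.wf (fun {p q} h => ?_)
    (InvImage.wf (fun p => (mword p.1 ++ mword p.2, (mword p.1).length))
      (wellFounded_wordLT.prod_lex wellFounded_lt))
  exact Prod.lex_def.mpr h

section

variable {k}

def nlsSpanLE (W : List X) : Submodule k (FA k X) :=
  Submodule.span k (evalM k '' {t | IsNLS t ∧ (mword t).Perm W ∧ lle (mword t) W})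

lemma evalM_mem_nlsSpanLE {t : FreeMagma X} {W : List X} (ht : IsNLS t) (hp : (mword t).Perm W)
    (hle : lle (mword t) W) : evalM k t ∈ nlsSpanLE W :=
  Submodule.subset_span ⟨t, ⟨ht, hp, hle⟩, rfl⟩

lemma nlsSpanLE_mono {V W : List X} (hp : V.Perm W) (hle : lle V W) :
    nlsSpanLE (k := k) V ≤ nlsSpanLE W :=
  Submodule.span_mono <| Set.image_mono fun _ ⟨ht, htp, htle⟩ =>
    ⟨ht, htp.trans hp, htle.trans hle⟩

omit [LinearOrder X] in
lemma evalM_mul_eq_lie (a b : FreeMagma X) : evalM k (a.mul b) = ⁅evalM k a, evalM k b⁆ :=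
  (Ring.lie_def _ _).symm

variable (k) in
def BracketReduces (s r : FreeMagma X) : Prop :=
  IsNLS s → IsNLS r → llt (mword r) (mword s) →
    ⁅evalM k s, evalM k r⁆ ∈ nlsSpanLE (mword s ++ mword r)

section Jacobi

variable {s₁ s₂ r : FreeMagma X} (hs : IsNLS (s₁.mul s₂)) (hr : IsNLS r)
  (hrs₂ : llt (mword r) (mword s₂))
  (ih : ∀ s' r', ReductionLT (s', r') (s₁.mul s₂, r) → BracketReduces k s' r')
include hs hr hrs₂ ih

lemma lie_left_lie_mem_nlsSpanLE :
    ⁅evalM k s₁, ⁅evalM k s₂, evalM k r⁆⁆ ∈ nlsSpanLE (mword s₁ ++ mword s₂ ++ mword r) := by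
  have hs₁ := mword_length_pos s₁
  have hs₂r := ih s₂ r (.inl (.inl (by simp only [mword_mul, List.length_append]; omega)))
    hs.right hr hrs₂
  refine lie_mem_of_mem_span hs₂r ?_
  rintro _ ⟨t, ⟨ht, htp, htle⟩, rfl⟩
  have hts₁ : llt (mword t) (mword s₁) :=
    htle.trans_llt (llt_trans (llt_append_self _ (mword_ne_nil r)) hs.right_llt_left)
  have hp : (mword s₁ ++ mword t).Perm (mword s₁ ++ mword s₂ ++ mword r) := by
    simpa using htp.append_left (mword s₁)
  have hle : lle (mword s₁ ++ mword t) (mword s₁ ++ mword s₂ ++ mword r) := by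
    simpa using lle_append_left (mword s₁) htle
  refine nlsSpanLE_mono hp hle (ih s₁ t ?_ hs.left ht hts₁)
  rcases htle with hlt | heq
  · exact .inl (.inr ⟨hp, by simpa only [mword_mul, List.append_assoc, llt_append_left_iff]⟩)
  · have hs₂ := mword_length_pos s₂
    exact .inr ⟨by simp only [heq, mword_mul, List.append_assoc],
      by simp only [mword_mul, List.length_append]; omega⟩

lemma lie_right_lie_mem_nlsSpanLE :
    ⁅evalM k s₂, ⁅evalM k s₁, evalM k r⁆⁆ ∈ nlsSpanLE (mword s₁ ++ mword s₂ ++ mword r) := by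
  have hs₂ := mword_length_pos s₂
  have hs₁r := ih s₁ r (.inl (.inl (by simp only [mword_mul, List.length_append]; omega)))
    hs.left hr (llt_trans hrs₂ hs.right_llt_left)
  refine lie_mem_of_mem_span hs₁r ?_
  rintro _ ⟨t, ⟨ht, htp, htle⟩, rfl⟩
  have hp : (mword t ++ mword s₂).Perm (mword s₁ ++ mword s₂ ++ mword r) :=
    (htp.append_right _).trans (by simpa using List.perm_append_comm.append_left (mword s₁))
  rcases llt_trichotomy (mword s₂) (mword t) with hlt | heq | hlt
  · have hW : llt (mword t ++ mword s₂) (mword s₁ ++ mword s₂ ++ mword r) := by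
      refine (lle_append_of_length_eq htle htp.length_eq (.inr rfl)).trans_llt ?_
      simpa [llt_append_left_iff] using
        (hs.right.isLS.append_lltLetter_append hr.isLS hrs₂).llt
    rw [← lie_skew]
    exact neg_mem (nlsSpanLE_mono hp (.inl hW) (ih t s₂ (.inl (.inr ⟨hp, hW⟩)) ht hs.right hlt))
  · rw [hs.right.eq_of_mword_eq ht heq, lie_self]
    exact zero_mem _
  · have hp' := List.perm_append_comm.trans hp
    have hW : llt (mword s₂ ++ mword t) (mword s₁ ++ mword s₂ ++ mword r) :=
      (hs.right.isLS.lltLetter_append_of_llt (mword_ne_nil s₁) hs.right_llt_left _ _).llt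
    exact nlsSpanLE_mono hp' (.inl hW) (ih s₂ t (.inl (.inr ⟨hp', hW⟩)) hs.right ht hlt)

end Jacobi

theorem lie_evalM_mem_nlsSpanLE {s r : FreeMagma X} (hs : IsNLS s) (hr : IsNLS r)
    (hrs : llt (mword r) (mword s)) :
    ⁅evalM k s, evalM k r⁆ ∈ nlsSpanLE (mword s ++ mword r) := by
  suffices ∀ p : FreeMagma X × FreeMagma X, BracketReduces k p.1 p.2 from this (s, r) hs hr hrs
  refine fun p => wellFounded_reductionLT.induction (C := fun p => BracketReduces k p.1 p.2) p ?_
  rintro ⟨s, r⟩ ih hs hr hrs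
  have hsr : IsLS (mword s ++ mword r) := hs.isLS.append hr.isLS hrs
  cases s with
  | of x =>
    rw [← evalM_mul_eq_lie]
    exact evalM_mem_nlsSpanLE ⟨trivial, hr, hsr, trivial⟩ (.refl _) (.inr rfl)
  | mul s₁ s₂ =>
    by_cases hrs₂ : llt (mword r) (mword s₂)
    · have ih' s' r' (h : ReductionLT (s', r') (s₁.mul s₂, r)) := ih (s', r') h
      rw [evalM_mul_eq_lie, lie_lie, mword_mul]
      exact sub_mem (lie_left_lie_mem_nlsSpanLE hs hr hrs₂ ih')
        (lie_right_lie_mem_nlsSpanLE hs hr hrs₂ ih')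
    · rw [← evalM_mul_eq_lie]
      exact evalM_mem_nlsSpanLE ⟨hs, hr, hsr, hrs₂⟩ (.refl _) (.inr rfl)

lemma nlsSpanLE_le_span (W : List X) : nlsSpanLE W ≤
    Submodule.span k (Set.range fun t : {t : FreeMagma X // IsNLS t} => evalM k t.1) :=
  Submodule.span_mono <| by
    rintro _ ⟨t, ⟨ht, -⟩, rfl⟩
    exact ⟨⟨t, ht⟩, rfl⟩

lemma lie_evalM_mem_span {t₁ t₂ : FreeMagma X} (h₁ : IsNLS t₁) (h₂ : IsNLS t₂) :
    ⁅evalM k t₁, evalM k t₂⁆ ∈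
      Submodule.span k (Set.range fun t : {t : FreeMagma X // IsNLS t} => evalM k t.1) := by
  rcases llt_trichotomy (mword t₂) (mword t₁) with h | h | h
  · exact nlsSpanLE_le_span _ (lie_evalM_mem_nlsSpanLE h₁ h₂ h)
  · rw [h₁.eq_of_mword_eq h₂ h.symm, lie_self]
    exact zero_mem _
  · rw [← lie_skew]
    exact neg_mem (nlsSpanLE_le_span _ (lie_evalM_mem_nlsSpanLE h₂ h₁ h))

omit [LinearOrder X] in
lemma evalM_mem_lieSpan (t : FreeMagma X) :
    evalM k t ∈ LieSubalgebra.lieSpan k (FA k X) (gens k) := by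
  induction t using FreeMagma.rec with
  | of x => exact LieSubalgebra.subset_lieSpan ⟨x, rfl⟩
  | mul a b iha ihb =>
    rw [evalM_mul_eq_lie]
    exact LieSubalgebra.lie_mem _ iha ihb

end

theorem span_evalM_eq_lieSpan :
    Submodule.span k (Set.range fun t : {t : FreeMagma X // IsNLS t} => evalM k t.1) =
      LieSubalgebra.lieSpan k (FA k X) (gens k) := by
  rw [← LieSubalgebra.coe_lieSpan_eq_span_of_forall_lie_mem (by
    rintro _ ⟨t₁, rfl⟩ _ ⟨t₂, rfl⟩
    exact lie_evalM_mem_span t₁.2 t₂.2)]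
  congr 1
  refine le_antisymm (LieSubalgebra.lieSpan_le.mpr ?_) (LieSubalgebra.lieSpan_mono ?_)
  · rintro _ ⟨t, rfl⟩
    exact evalM_mem_lieSpan t.1
  · rintro _ ⟨x, rfl⟩
    exact ⟨⟨.of x, trivial⟩, rfl⟩

end LyndonShirshov

/-- The (commutator-evaluated) nonassociative Lyndon--Shirshov words form a linear
basis of the free Lie algebra, i.e. of the Lie subalgebra of the free associative
algebra generated by X: they are linearly independent and span its underlying
submodule. -/
theorem stmt_5 :
    LinearIndependent k (fun t : {t : FreeMagma X // IsNLS t} => evalM k t.1) ∧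
    Submodule.span k (Set.range fun t : {t : FreeMagma X // IsNLS t} => evalM k t.1) =
      LieSubalgebra.toSubmodule (LieSubalgebra.lieSpan k (FA k X) (gens k)) :=
  ⟨LyndonShirshov.linearIndependent_evalM k, LyndonShirshov.span_evalM_eq_lieSpan k⟩
end
end

section
/- In the free Lie algebra over a field k generated by Y = {a, b, c}, the left-normed elements t_i = [[...[[a,b],b],...,b],c] (with i occurrences of b), for i = 1, 2, 3, ..., generate a free Lie subalgebra and form a set of free generators of that subalgebra. -/
/-!
Let `K` be the free Lie algebra on `ℕ ⊕ ℕ`, with the derivations `σ : inl n ↦ inl (n + 1)` and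
`τ : inl n ↦ inr n` (both killing `inr`); derivations of a free Lie algebra may be prescribed
freely on generators, being lifts into the split extension `L ⋉ M`. In the holomorph `K ⋊ Der K`,
the assignment `a ↦ inl 0`, `b ↦ -σ`, `c ↦ -τ` sends `⟨a b^i c⟩` to the generator `inr (i + 1)`
of `K`. Hence the map in question, followed by this representation, is the map of free Lie algebras
induced by the injection `i ↦ inr (i + 1)` of generators, which has a left inverse.
-/

noncomputable section

variable (k : Type*) [Field k]

/-- The element `[[...[[a,b],b],...,b]]` with `i` occurrences of `b`
in the free Lie algebra on three generators `a = 0`, `b = 1`, `c = 2`. -/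
def abPow : ℕ → FreeLieAlgebra k (Fin 3)
  | 0 => FreeLieAlgebra.of k 0
  | n + 1 => ⁅abPow n, FreeLieAlgebra.of k 1⁆

/-- The left-normed element `⟨a b^i c⟩ = [[...[[a,b],b],...,b],c]` with `i ≥ 1`
occurrences of `b`. -/
def abc (i : ℕ) : FreeLieAlgebra k (Fin 3) := ⁅abPow k (i + 1), FreeLieAlgebra.of k 2⁆

open Function LieAlgebra LieModule.Cohomology FreeLieAlgebra SemiDirectSum

namespace LieAlgebra.ofTwoCocycle

variable {R L M : Type*} [CommRing R] [LieRing L] [LieAlgebra R L] [AddCommGroup M] [Module R M]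
  [LieRingModule L M] [LieModule R L M] (c : twoCocycle R L M)

def fst : ofTwoCocycle c →ₗ⁅R⁆ L where
  toFun x := x.carrier.1
  map_add' _ _ := rfl
  map_smul' _ _ := rfl
  map_lie' := rfl

def snd : ofTwoCocycle c →ₗ[R] M where
  toFun x := x.carrier.2
  map_add' _ _ := rfl
  map_smul' _ _ := rfl

@[simp] lemma fst_ofProd (p : L × M) : fst c (ofProd c p) = p.1 := rfl

@[simp] lemma snd_ofProd (p : L × M) : snd c (ofProd c p) = p.2 := rfl

lemma snd_lie (x y : ofTwoCocycle c) :
    snd c ⁅x, y⁆ = (c : L →ₗ[R] L →ₗ[R] M) (fst c x) (fst c y) + ⁅fst c x, snd c y⁆ -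
      ⁅fst c y, snd c x⁆ :=
  rfl

end LieAlgebra.ofTwoCocycle

namespace FreeLieAlgebra

variable {R X : Type*} [CommRing R]

theorem lift_of_comp_injective {Y : Type*} {f : X → Y} (hf : Injective f) :
    Injective (lift R (of R ∘ f)) := by
  have h : (lift R (extend f (of R) 0)).comp (lift R (of R ∘ f)) = LieHom.id :=
    hom_ext fun x => by simp [hf.extend_apply]
  exact LeftInverse.injective (g := lift R (extend f (of R) 0)) (LieHom.congr_fun h)

variable {M : Type*} [AddCommGroup M] [Module R M] [LieRingModule (FreeLieAlgebra R X) M]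
  [LieModule R (FreeLieAlgebra R X) M]

variable (R) in
def liftGraph (f : X → M) :
    FreeLieAlgebra R X →ₗ⁅R⁆ ofTwoCocycle (0 : twoCocycle R (FreeLieAlgebra R X) M) :=
  lift R fun x => ofProd 0 (of R x, f x)

lemma fst_liftGraph (f : X → M) (a : FreeLieAlgebra R X) :
    ofTwoCocycle.fst 0 (liftGraph R f a) = a := by
  have h : (ofTwoCocycle.fst 0).comp (liftGraph R f) = LieHom.id :=
    hom_ext fun x => by simp [liftGraph]
  exact LieHom.congr_fun h a

variable (R) in
def liftDerivation (f : X → M) : LieDerivation R (FreeLieAlgebra R X) M where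
  toLinearMap := ofTwoCocycle.snd 0 ∘ₗ (liftGraph R f).toLinearMap
  leibniz' a b := by simp [ofTwoCocycle.snd_lie, fst_liftGraph]

@[simp] lemma liftDerivation_of (f : X → M) (x : X) : liftDerivation R f (of R x) = f x := by
  simp [liftDerivation, liftGraph]

end FreeLieAlgebra

section

variable {k}

local notation "K" => FreeLieAlgebra k (ℕ ⊕ ℕ)

def shiftDerivation : LieDerivation k K K :=
  liftDerivation k (Sum.elim (fun n => of k (.inl (n + 1))) 0)

def switchDerivation : LieDerivation k K K :=
  liftDerivation k (Sum.elim (fun n => of k (.inr n)) 0)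

-- The signs make `⁅⟨x, 0⟩, ⟨0, -D⟩⁆ = ⟨D x, 0⟩`, so bracketing with `b`, `c` applies the derivations.
def holomorphRep : FreeLieAlgebra k (Fin 3) →ₗ⁅k⁆ K ⋊⁅LieHom.id⁆ LieDerivation k K K :=
  lift k ![⟨of k (.inl 0), 0⟩, ⟨0, -shiftDerivation⟩, ⟨0, -switchDerivation⟩]

lemma holomorphRep_abPow (n : ℕ) : holomorphRep (abPow k n) = ⟨of k (.inl n), 0⟩ := by
  induction n with
  | zero => simp [abPow, holomorphRep]
  | succ n ih =>
    rw [abPow, LieHom.map_lie, ih]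
    simp [holomorphRep, shiftDerivation]

lemma holomorphRep_abc (i : ℕ) : holomorphRep (abc k i) = ⟨of k (.inr (i + 1)), 0⟩ := by
  rw [abc, LieHom.map_lie, holomorphRep_abPow]
  simp [holomorphRep, switchDerivation]

end

/-- In the free Lie algebra on `{a, b, c}` over a field `k`, the left-normed
elements `⟨a b^i c⟩`, `i = 1, 2, 3, ...`, freely generate a free Lie subalgebra:
the induced morphism from the free Lie algebra on countably many generators,
sending the `i`-th generator to `⟨a b^i c⟩`, is injective. -/
theorem stmt_12 :
    Function.Injective (FreeLieAlgebra.lift k (fun n : ℕ => abc k n)) := by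
  have hcomp : holomorphRep.comp (lift k fun n => abc k n) =
      (inl LieHom.id).comp (lift k (of k ∘ Sum.inr ∘ Nat.succ)) :=
    hom_ext fun i => by simp [holomorphRep_abc]
  refine Injective.of_comp (f := holomorphRep) ?_
  rw [← LieHom.coe_comp, hcomp, LieHom.coe_comp]
  exact (inl_injective _).comp (lift_of_comp_injective (Sum.inr_injective.comp Nat.succ_injective))
end
end
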